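/- arXiv:1912.06930 — 2 statements merged into one kernel-verified Lean document; each statement's English description precedes it below -/
import Mathlib

section
/- Nonnegative lattice paths with up-steps +1 and down-steps -k that start at 0 and end at height t (with 0 ≤ t ≤ k) are in bijection with (t+1)-tuples of k-Dyck paths, by cutting at the last visit to each of the levels 0, 1, ..., t-1. Consequently their generating function by length is z^t * y(z)^(t+1). -/
/-!
Cutting a nonnegative path that ends at height `t + 1` after its last visit to height `t` writes
it uniquely as `q ++ true :: d`: the step leaving height `t` for the last time must be an up-step
(a down-step would land below `t`), `q` is a nonnegative path to height `t`, and `d` stays at or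
above the new level, i.e. is a `k`-Dyck path. Iterating gives the bijection with `(t+1)`-tuples
of Dyck paths, and on length generating functions `F_{t+1} = z F_t F_0`, so `F_t = z^t F_0^{t+1}`.
Removing the last (necessarily down-)step of a nonempty Dyck path gives
`F_0 = 1 + z F_k = 1 + z^{k+1} F_0^{k+1}`, an equation with a unique power series solution.
-/

open PowerSeries

/-- Total displacement of a path encoded as a list of booleans (`true` = up-step `+1`,
`false` = down-step `-k`). -/
def stepsSum (k : ℕ) (l : List Bool) : ℤ :=
  (l.map fun b => if b then (1 : ℤ) else -(k : ℤ)).sum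

section WeightGF

variable (R : Type*) [CommSemiring R] {α β : Type*}

-- An infinite fibre contributes `0`, the junk value of `Nat.card`.
noncomputable def weightGF (w : α → ℕ) : R⟦X⟧ :=
  mk fun n => (Nat.card {a // w a = n} : R)

variable {R}

lemma weightGF_congr {wa : α → ℕ} {wb : β → ℕ} (e : α ≃ β) (h : ∀ a, wb (e a) = wa a) :
    weightGF R wb = weightGF R wa := by
  ext n
  simp only [weightGF, coeff_mk]
  exact congrArg Nat.cast (Nat.card_congr (e.subtypeEquiv fun a => by rw [h])).symm

lemma weightGF_add_one (w : α → ℕ) : weightGF R (fun a => w a + 1) = X * weightGF R w := by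
  ext (_ | n)
  · simp [weightGF]
  · simp only [weightGF, coeff_mk, coeff_succ_X_mul, Nat.add_right_cancel_iff]

lemma weightGF_option (w : α → ℕ) :
    weightGF R (fun o : Option α => o.elim 0 (w · + 1)) = 1 + X * weightGF R w := by
  ext (_ | n)
  · have : Unique {o : Option α // o.elim 0 (w · + 1) = 0} :=
      ⟨⟨⟨none, rfl⟩⟩, by
        rintro ⟨_ | a, h⟩
        · rfl
        · simp at h⟩
    simp [weightGF]
  · have e : {a // w a = n} ≃ {o : Option α // o.elim 0 (w · + 1) = n + 1} :=
      Equiv.ofBijective (fun a => ⟨some a.1, by simp [a.2]⟩)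
        ⟨fun a b h => Subtype.ext (Option.some_injective _ (congrArg Subtype.val h)),
          by
            rintro ⟨_ | a, h⟩
            · simp at h
            · exact ⟨⟨a, by simpa using h⟩, rfl⟩⟩
    simp [weightGF, coeff_succ_X_mul, Nat.card_congr e]

lemma weightGF_prod (wa : α → ℕ) (wb : β → ℕ) [∀ n, Finite {a // wa a = n}]
    [∀ n, Finite {b // wb b = n}] :
    weightGF R (fun x : α × β => wa x.1 + wb x.2) = weightGF R wa * weightGF R wb := by
  ext n
  let e : {x : α × β // wa x.1 + wb x.2 = n} ≃
      Σ ij : Finset.HasAntidiagonal.antidiagonal n, {a // wa a = ij.1.1} × {b // wb b = ij.1.2} :=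
    { toFun := fun x =>
        ⟨⟨(wa x.1.1, wb x.1.2), Finset.HasAntidiagonal.mem_antidiagonal.mpr x.2⟩,
          ⟨_, rfl⟩, ⟨_, rfl⟩⟩
      invFun := fun s => ⟨(s.2.1, s.2.2), by
        rw [s.2.1.2, s.2.2.2]; exact Finset.HasAntidiagonal.mem_antidiagonal.mp s.1.2⟩
      left_inv := fun _ => rfl
      right_inv := by
        rintro ⟨⟨⟨i, j⟩, _⟩, ⟨a, ha⟩, ⟨b, hb⟩⟩
        dsimp only at ha hb
        subst ha hb
        rfl }
  simp only [weightGF, coeff_mk, coeff_mul, Nat.card_congr e, Nat.card_sigma, Nat.card_prod,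
    Nat.cast_sum, Nat.cast_mul]
  exact Finset.sum_coe_sort _ fun ij : ℕ × ℕ =>
    (Nat.card {a // wa a = ij.1} : R) * Nat.card {b // wb b = ij.2}

end WeightGF

theorem PowerSeries.eq_of_eq_add_X_pow_mul_pow {R : Type*} [CommRing R] {m n : ℕ} (hm : 0 < m)
    {c f g : R⟦X⟧} (hf : f = c + X ^ m * f ^ n) (hg : g = c + X ^ m * g ^ n) : f = g := by
  have key : (1 - X ^ m * ∑ i ∈ Finset.range n, f ^ i * g ^ (n - 1 - i)) * (f - g) = 0 := by
    have : f - g = X ^ m * (f ^ n - g ^ n) := by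
      conv_lhs => rw [hf, hg]
      ring
    rw [sub_mul, one_mul, mul_assoc, geom_sum₂_mul, ← this, sub_self]
  have hunit : IsUnit (1 - X ^ m * ∑ i ∈ Finset.range n, f ^ i * g ^ (n - 1 - i)) := by
    rw [isUnit_iff_constantCoeff]
    simp [zero_pow hm.ne']
  exact sub_eq_zero.mp ((hunit.mul_right_eq_zero).mp key)

@[simp] lemma stepsSum_nil (k : ℕ) : stepsSum k [] = 0 := rfl

@[simp] lemma stepsSum_cons (k : ℕ) (b : Bool) (l : List Bool) :
    stepsSum k (b :: l) = (if b then 1 else -(k : ℤ)) + stepsSum k l := by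
  simp [stepsSum]

@[simp] lemma stepsSum_append (k : ℕ) (l l' : List Bool) :
    stepsSum k (l ++ l') = stepsSum k l + stepsSum k l' := by
  simp [stepsSum]

def IsNonnegPath (k : ℕ) (t : ℤ) (p : List Bool) : Prop :=
  stepsSum k p = t ∧ ∀ q, q <+: p → 0 ≤ stepsSum k q

abbrev NonnegPath (k : ℕ) (t : ℤ) : Type := {p : List Bool // IsNonnegPath k t p}

namespace IsNonnegPath

variable {k : ℕ} {s t : ℤ} {p q d : List Bool}

lemma nil (k : ℕ) : IsNonnegPath k 0 [] :=
  ⟨rfl, fun q hq => by rw [List.prefix_nil.mp hq, stepsSum_nil]⟩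

lemma nonneg (hp : IsNonnegPath k t p) : 0 ≤ t :=
  hp.1 ▸ hp.2 p (List.prefix_refl p)

lemma concat_iff {b : Bool} :
    IsNonnegPath k t (p ++ [b]) ↔ 0 ≤ t ∧ IsNonnegPath k (t - if b then 1 else -(k : ℤ)) p := by
  simp only [IsNonnegPath, List.prefix_concat_iff, forall_eq_or_imp, stepsSum_append,
    stepsSum_cons, stepsSum_nil, add_zero]
  constructor
  · rintro ⟨rfl, hp, hq⟩
    exact ⟨hp, by ring, hq⟩
  · rintro ⟨ht, hp, hq⟩
    exact ⟨by rw [hp]; ring, by rw [hp]; simpa using ht, hq⟩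

-- Allowing any end height `s > t` lets the induction peel off the last step.
lemma exists_split (hts : t < s) (ht : 0 ≤ t) (hp : IsNonnegPath k s p) :
    ∃ q d, IsNonnegPath k t q ∧ IsNonnegPath k (s - t - 1) d ∧ p = q ++ true :: d := by
  induction p using List.reverseRecOn generalizing s with
  | nil => exact absurd hp.1 (by rw [stepsSum_nil]; omega)
  | append_singleton p b ih =>
    obtain ⟨hs, hp⟩ := concat_iff.mp hp
    cases b with
    | true =>
      simp only [if_true] at hp
      rcases eq_or_lt_of_le (show t ≤ s - 1 by omega) with rfl | hlt
      · exact ⟨p, [], hp, by simpa using nil k, rfl⟩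
      · obtain ⟨q, d, hq, hd, rfl⟩ := ih hlt hp
        refine ⟨q, d ++ [true], hq, concat_iff.mpr ⟨by omega, ?_⟩, by simp⟩
        convert hd using 1
        simp only [if_true]
        ring
    | false =>
      simp only [Bool.false_eq_true, if_false, sub_neg_eq_add] at hp
      obtain ⟨q, d, hq, hd, rfl⟩ := ih (by omega) hp
      refine ⟨q, d ++ [false], hq, concat_iff.mpr ⟨by omega, ?_⟩, by simp⟩
      convert hd using 1
      simp only [Bool.false_eq_true, if_false]
      ring

lemma lt_stepsSum_of_prefix (hq : stepsSum k q = t) (hd : IsNonnegPath k 0 d) {r : List Bool}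
    (hr : r <+: q ++ true :: d) (hlen : q.length < r.length) : t < stepsSum k r := by
  obtain ⟨r', rfl⟩ := List.prefix_of_prefix_length_le (List.prefix_append q _) hr hlen.le
  rw [List.prefix_append_right_inj] at hr
  rcases List.prefix_cons_iff.mp hr with rfl | ⟨r'', rfl, hr''⟩
  · simp at hlen
  · have := hd.2 r'' hr''
    simp only [stepsSum_append, stepsSum_cons, if_true, hq]
    omega

lemma append_true_cons (hq : IsNonnegPath k t q) (hd : IsNonnegPath k 0 d) :
    IsNonnegPath k (t + 1) (q ++ true :: d) := by
  refine ⟨by simp [hq.1, hd.1], fun r hr => ?_⟩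
  rcases le_or_gt r.length q.length with hle | hlt
  · exact hq.2 r (List.prefix_of_prefix_length_le hr (List.prefix_append q _) hle)
  · have := lt_stepsSum_of_prefix hq.1 hd hr hlt
    have := hq.nonneg
    omega

lemma eq_of_append_true_cons_eq {q' d' : List Bool} (hq : IsNonnegPath k t q)
    (hd : IsNonnegPath k 0 d) (hq' : IsNonnegPath k t q') (hd' : IsNonnegPath k 0 d')
    (h : q ++ true :: d = q' ++ true :: d') : q = q' ∧ d = d' := by
  have hlen : q.length = q'.length := by
    by_contra hne
    rcases Nat.lt_or_gt_of_ne hne with hlt | hlt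
    · have := lt_stepsSum_of_prefix hq.1 hd (h ▸ List.prefix_append q' _) hlt
      linarith [hq'.1]
    · have := lt_stepsSum_of_prefix hq'.1 hd' (h.symm ▸ List.prefix_append q _) hlt
      linarith [hq.1]
  obtain ⟨rfl, htail⟩ := List.append_inj h hlen
  exact ⟨rfl, List.cons_injective htail⟩

end IsNonnegPath

namespace NonnegPath

variable {k : ℕ} {t : ℤ}

def join (w : NonnegPath k t × NonnegPath k 0) : NonnegPath k (t + 1) :=
  ⟨w.1.1 ++ true :: w.2.1, w.1.2.append_true_cons w.2.2⟩

lemma join_bijective (ht : 0 ≤ t) : Function.Bijective (join (k := k) (t := t)) := by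
  refine ⟨fun w w' h => ?_, fun p => ?_⟩
  · obtain ⟨h1, h2⟩ := IsNonnegPath.eq_of_append_true_cons_eq w.1.2 w.2.2 w'.1.2 w'.2.2
      (congrArg Subtype.val h)
    exact Prod.ext (Subtype.ext h1) (Subtype.ext h2)
  · obtain ⟨q, d, hq, hd, hp⟩ := p.2.exists_split (lt_add_one t) ht
    exact ⟨(⟨q, hq⟩, ⟨d, by simpa using hd⟩), Subtype.ext hp.symm⟩

noncomputable def splitEquiv (ht : 0 ≤ t) :
    NonnegPath k t × NonnegPath k 0 ≃ NonnegPath k (t + 1) :=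
  Equiv.ofBijective join (join_bijective ht)

@[simp] lemma length_splitEquiv (ht : 0 ≤ t) (w : NonnegPath k t × NonnegPath k 0) :
    (splitEquiv ht w).1.length = w.1.1.length + w.2.1.length + 1 := by
  simp only [splitEquiv, Equiv.ofBijective_apply, join, List.length_append, List.length_cons]
  omega

noncomputable def tupleEquiv (k : ℕ) : (t : ℕ) → NonnegPath k t ≃ (Fin (t + 1) → NonnegPath k 0)
  | 0 => (Equiv.funUnique (Fin 1) _).symm
  | t + 1 => (splitEquiv (Int.natCast_nonneg t)).symm.trans <|
      ((Equiv.prodComm _ _).trans ((Equiv.refl _).prodCongr (tupleEquiv k t))).trans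
        (Fin.snocEquiv fun _ => NonnegPath k 0)

lemma tupleEquiv_succ_splitEquiv (k t : ℕ) (w : NonnegPath k t × NonnegPath k 0) :
    tupleEquiv k (t + 1) (splitEquiv (Int.natCast_nonneg t) w) =
      Fin.snoc (α := fun _ => NonnegPath k 0) (tupleEquiv k t w.1) w.2 := by
  simp [tupleEquiv, Fin.snocEquiv]

lemma sum_length_tupleEquiv (k t : ℕ) (p : NonnegPath k t) :
    ∑ i, (tupleEquiv k t p i).1.length + t = p.1.length := by
  induction t with
  | zero => simp [tupleEquiv]
  | succ t ih =>
    obtain ⟨w, rfl⟩ := (splitEquiv (k := k) (Int.natCast_nonneg t)).surjective p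
    rw [tupleEquiv_succ_splitEquiv, Fin.sum_univ_castSucc, length_splitEquiv, ← ih]
    simp only [Fin.snoc_castSucc, Fin.snoc_last]
    omega

def ofOption (k : ℕ) : Option (NonnegPath k k) → NonnegPath k 0
  | none => ⟨[], IsNonnegPath.nil k⟩
  | some p => ⟨p.1 ++ [false], IsNonnegPath.concat_iff.mpr ⟨le_rfl, by simpa using p.2⟩⟩

lemma ofOption_bijective (k : ℕ) : Function.Bijective (ofOption k) := by
  refine ⟨?_, fun p => ?_⟩
  · rintro (_ | p) (_ | p') h <;> simp only [ofOption, Subtype.mk.injEq] at h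
    · rfl
    · exact absurd h.symm (by simp)
    · exact absurd h (by simp)
    · exact congrArg some (Subtype.ext (List.append_cancel_right h))
  · obtain ⟨p, hp⟩ := p
    induction p using List.reverseRecOn with
    | nil => exact ⟨none, rfl⟩
    | append_singleton p b _ =>
      obtain ⟨-, hp⟩ := IsNonnegPath.concat_iff.mp hp
      cases b with
      | true => exact absurd hp.nonneg (by simp)
      | false => exact ⟨some ⟨p, by simpa using hp⟩, rfl⟩

noncomputable def optionEquiv (k : ℕ) : Option (NonnegPath k k) ≃ NonnegPath k 0 :=
  Equiv.ofBijective (ofOption k) (ofOption_bijective k)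

lemma length_optionEquiv (k : ℕ) (o : Option (NonnegPath k k)) :
    (optionEquiv k o).1.length = o.elim 0 (·.1.length + 1) := by
  cases o <;> simp [optionEquiv, ofOption]

instance finite_length_eq (k : ℕ) (t : ℤ) (n : ℕ) :
    Finite {p : NonnegPath k t // p.1.length = n} :=
  Finite.of_injective (β := List.Vector Bool n) (fun p => ⟨p.1.1, p.2⟩)
    fun _ _ h => Subtype.ext (Subtype.ext (congrArg List.Vector.toList h))

section LengthGF

variable (R : Type*) [CommSemiring R] {k : ℕ}

noncomputable def lengthGF (k : ℕ) (t : ℤ) : R⟦X⟧ :=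
  weightGF R fun p : NonnegPath k t => p.1.length

@[simp] lemma coeff_lengthGF (t : ℤ) (n : ℕ) :
    coeff n (lengthGF R k t) = Nat.card {p : NonnegPath k t // p.1.length = n} := by
  rw [lengthGF, weightGF, coeff_mk]

lemma lengthGF_add_one {t : ℤ} (ht : 0 ≤ t) :
    lengthGF R k (t + 1) = X * lengthGF R k t * lengthGF R k 0 := by
  rw [lengthGF, weightGF_congr (splitEquiv ht) (length_splitEquiv ht), weightGF_add_one,
    weightGF_prod (fun p : NonnegPath k t => p.1.length) (fun p : NonnegPath k 0 => p.1.length),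
    mul_assoc]
  rfl

lemma lengthGF_natCast (t : ℕ) :
    lengthGF R k t = X ^ t * lengthGF R k 0 ^ (t + 1) := by
  induction t with
  | zero => simp
  | succ t ih =>
    rw [Nat.cast_succ, lengthGF_add_one R (Int.natCast_nonneg t), ih]
    ring

lemma lengthGF_zero_eq :
    lengthGF R k 0 = 1 + X ^ (k + 1) * lengthGF R k 0 ^ (k + 1) := by
  calc lengthGF R k 0 = 1 + X * lengthGF R k k :=
        (weightGF_congr (optionEquiv k) (length_optionEquiv k)).trans (weightGF_option _)
    _ = 1 + X ^ (k + 1) * lengthGF R k 0 ^ (k + 1) := by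
      rw [lengthGF_natCast]
      ring

end LengthGF

end NonnegPath

theorem stmt_12_general (k t : ℕ)
    (y : PowerSeries ℚ) (hy : y = 1 + X ^ (k + 1) * y ^ (k + 1)) :
    (∃ e : {p : List Bool // stepsSum k p = t ∧ ∀ q, q <+: p → 0 ≤ stepsSum k q} ≃
          (Fin (t + 1) → {p : List Bool // stepsSum k p = 0 ∧
            ∀ q, q <+: p → 0 ≤ stepsSum k q}),
        ∀ p, (∑ i, ((e p) i).val.length) + t = p.val.length) ∧
    ∀ N : ℕ,
      (Nat.card {p : {p : List Bool // stepsSum k p = t ∧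
          ∀ q, q <+: p → 0 ≤ stepsSum k q} // p.val.length = N} : ℚ) =
        coeff N (X ^ t * y ^ (t + 1)) := by
  refine ⟨⟨NonnegPath.tupleEquiv k t, NonnegPath.sum_length_tupleEquiv k t⟩, fun N => ?_⟩
  have hyGF : y = NonnegPath.lengthGF ℚ k 0 :=
    PowerSeries.eq_of_eq_add_X_pow_mul_pow k.succ_pos hy (NonnegPath.lengthGF_zero_eq ℚ)
  rw [hyGF, ← NonnegPath.lengthGF_natCast, NonnegPath.coeff_lengthGF]
  rfl

/-- Nonnegative lattice paths with steps `+1`/`-k` from 0 to height `t` (for `0 ≤ t ≤ k`)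
are in bijection with `(t+1)`-tuples of `k`-Dyck paths (losing `t` up-steps in length),
and consequently their generating function by length is `z^t y(z)^(t+1)`, where
`y = 1 + z^(k+1) y^(k+1)` is the `k`-Dyck generating function. -/
theorem stmt_12 (k t : ℕ) (hk : 0 < k) (ht : t ≤ k)
    (y : PowerSeries ℚ) (hy : y = 1 + X ^ (k + 1) * y ^ (k + 1)) :
    (∃ e : {p : List Bool // stepsSum k p = t ∧ ∀ q, q <+: p → 0 ≤ stepsSum k q} ≃
          (Fin (t + 1) → {p : List Bool // stepsSum k p = 0 ∧
            ∀ q, q <+: p → 0 ≤ stepsSum k q}),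
        ∀ p, (∑ i, ((e p) i).val.length) + t = p.val.length) ∧
    ∀ N : ℕ,
      (Nat.card {p : {p : List Bool // stepsSum k p = t ∧
          ∀ q, q <+: p → 0 ≤ stepsSum k q} // p.val.length = N} : ℚ) =
        coeff N (X ^ t * y ^ (t + 1)) :=
  stmt_12_general k t y hy
end

section
/- For 0 ≤ t ≤ k and ρ = k^k/(k+1)^(k+1), the value D_t(evaluated with z^(k+1) = ρ) = sum over 0 ≤ ℓ ≤ t/k of binom(t-kℓ, ℓ)(-ρ)^ℓ equals 1; and for t > k this sum is strictly less than 1. -/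
/-! Pascal's rule gives the recurrence `D_{t+k+1} = D_{t+k} - ρ D_t`, and `D_t = 1` for `t ≤ k`.
Writing `ρ = (1 - r) r^k` with `r = k/(k+1)`, strong induction shows `D_{t+1} ≥ r D_t`, so every
`D_t` is positive, and then the recurrence makes `D_t` strictly decreasing from `t = k` on. -/

open Finset

theorem Nat.choose_sub_mul_eq_zero {k t ℓ : ℕ} (h : t < (k + 1) * ℓ) :
    (t - k * ℓ).choose ℓ = 0 := by
  rcases ℓ with _ | ℓ
  · simp at h
  · exact Nat.choose_eq_zero_of_lt (by rw [add_mul, one_mul] at h; omega)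

theorem Nat.choose_sub_mul_succ (k t ℓ : ℕ) :
    (t + k + 1 - k * (ℓ + 1)).choose (ℓ + 1)
      = (t + k - k * (ℓ + 1)).choose (ℓ + 1) + (t - k * ℓ).choose ℓ := by
  rw [mul_add_one]
  rcases le_or_gt (k * ℓ) t with h | h
  · rw [show t + k + 1 - (k * ℓ + k) = t - k * ℓ + 1 by omega,
      show t + k - (k * ℓ + k) = t - k * ℓ by omega, Nat.choose_succ_succ', add_comm]
  · obtain ⟨m, rfl⟩ : ∃ m, ℓ = m + 1 := Nat.exists_eq_succ_of_ne_zero (by rintro rfl; simp at h)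
    rw [show t + k + 1 - (k * (m + 1) + k) = 0 by omega, show t + k - (k * (m + 1) + k) = 0 by omega,
      show t - k * (m + 1) = 0 by omega]
    simp

section DetSum

variable {R : Type*} [CommSemiring R]

/-- `D_t` evaluated at `z ^ (k + 1) = x`; the terms with `ℓ > t / k` vanish. -/
def detSum (k : ℕ) (x : R) (t : ℕ) : R :=
  ∑ ℓ ∈ range (t + 1), ((t - k * ℓ).choose ℓ : R) * x ^ ℓ

theorem sum_range_choose_sub_mul_eq {k t M N : ℕ} (x : R) (hM : t < (k + 1) * M) (hMN : M ≤ N) :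
    ∑ ℓ ∈ range N, ((t - k * ℓ).choose ℓ : R) * x ^ ℓ
      = ∑ ℓ ∈ range M, ((t - k * ℓ).choose ℓ : R) * x ^ ℓ := by
  refine (sum_subset (range_subset_range.2 hMN) fun ℓ _ hℓ => ?_).symm
  have hMℓ : M ≤ ℓ := by simpa using hℓ
  rw [Nat.choose_sub_mul_eq_zero (hM.trans_le (Nat.mul_le_mul_left _ hMℓ)), Nat.cast_zero, zero_mul]

theorem detSum_eq_sum_range {k t N : ℕ} (x : R) (hN : t + 1 ≤ N) :
    detSum k x t = ∑ ℓ ∈ range N, ((t - k * ℓ).choose ℓ : R) * x ^ ℓ :=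
  (sum_range_choose_sub_mul_eq x (by nlinarith) hN).symm

theorem sum_range_div_add_one_eq_detSum {k : ℕ} (hk : 0 < k) (x : R) (t : ℕ) :
    ∑ ℓ ∈ range (t / k + 1), ((t - k * ℓ).choose ℓ : R) * x ^ ℓ = detSum k x t := by
  have ht : t < k * (t / k + 1) := Nat.lt_mul_div_succ t hk
  exact (sum_range_choose_sub_mul_eq x (by nlinarith) (by
    have := Nat.div_le_self t k; omega)).symm

theorem detSum_of_le {k t : ℕ} (x : R) (h : t ≤ k) : detSum k x t = 1 := by
  rw [detSum, sum_range_choose_sub_mul_eq x (M := 1) (by omega) (by omega)]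
  simp

theorem detSum_add_succ (k : ℕ) (x : R) (t : ℕ) :
    detSum k x (t + k + 1) = detSum k x (t + k) + x * detSum k x t := by
  rw [detSum_eq_sum_range x (N := t + k + 2) le_rfl, detSum_eq_sum_range x (N := t + k + 2) (by omega),
    detSum_eq_sum_range x (N := t + k + 1) (by omega), sum_range_succ', sum_range_succ' _ (t + k + 1),
    mul_sum]
  have hshift (ℓ : ℕ) : ((t - k * ℓ).choose ℓ : R) * x ^ (ℓ + 1)
      = x * (((t - k * ℓ).choose ℓ : R) * x ^ ℓ) := by ring
  simp only [Nat.choose_sub_mul_succ, Nat.cast_add, add_mul, sum_add_distrib, hshift, mul_zero,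
    Nat.sub_zero, Nat.choose_zero_right]
  ring

end DetSum

section Recurrence

variable {k : ℕ} {r : ℝ} {f : ℕ → ℝ}

theorem pow_mul_le_of_mul_le_succ (hr : 0 ≤ r) {t i : ℕ}
    (h : ∀ j < i, r * f (t + j) ≤ f (t + j + 1)) : r ^ i * f t ≤ f (t + i) := by
  induction i with
  | zero => simp
  | succ i ih =>
    calc r ^ (i + 1) * f t = r * (r ^ i * f t) := by ring
      _ ≤ r * f (t + i) := mul_le_mul_of_nonneg_left (ih fun j hj => h j (by omega)) hr
      _ ≤ f (t + (i + 1)) := h i (by omega)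

theorem mul_le_succ_of_recurrence (hr₀ : 0 ≤ r) (hr₁ : r ≤ 1) (hinit : ∀ t ≤ k, f t = 1)
    (hrec : ∀ t, f (t + k + 1) = f (t + k) - (1 - r) * r ^ k * f t) (t : ℕ) :
    r * f t ≤ f (t + 1) := by
  induction t using Nat.strong_induction_on with
  | _ t ih =>
    rcases le_or_gt (t + 1) k with h | h
    · rw [hinit t (by omega), hinit (t + 1) h]
      linarith
    · obtain ⟨s, rfl⟩ : ∃ s, t = s + k := ⟨t - k, by omega⟩
      have hchain : r ^ k * f s ≤ f (s + k) :=
        pow_mul_le_of_mul_le_succ hr₀ fun j hj => ih (s + j) (by omega)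
      -- `f (s + k + 1) ≥ f (s + k) - (1 - r) * f (s + k)` by `hchain`
      rw [hrec]
      nlinarith

theorem pos_of_recurrence (hr₀ : 0 < r) (hr₁ : r ≤ 1) (hinit : ∀ t ≤ k, f t = 1)
    (hrec : ∀ t, f (t + k + 1) = f (t + k) - (1 - r) * r ^ k * f t) (t : ℕ) : 0 < f t := by
  have h := pow_mul_le_of_mul_le_succ (t := 0) (i := t) hr₀.le
    fun j _ => mul_le_succ_of_recurrence hr₀.le hr₁ hinit hrec _
  rw [hinit 0 (Nat.zero_le _), zero_add, mul_one] at h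
  exact (pow_pos hr₀ t).trans_le h

theorem lt_one_of_recurrence (hr₀ : 0 < r) (hr₁ : r < 1) (hinit : ∀ t ≤ k, f t = 1)
    (hrec : ∀ t, f (t + k + 1) = f (t + k) - (1 - r) * r ^ k * f t) {t : ℕ} (ht : k < t) :
    f t < 1 := by
  have hdecr (s : ℕ) : f (s + k + 1) < f (s + k) := by
    have := pos_of_recurrence hr₀ hr₁.le hinit hrec s
    rw [hrec]
    have : 0 < (1 - r) * r ^ k := mul_pos (by linarith) (pow_pos hr₀ k)
    nlinarith
  induction t, ht using Nat.le_induction with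
  | base => simpa [hinit k le_rfl] using hdecr 0
  | succ n hn ih =>
    obtain ⟨s, rfl⟩ : ∃ s, n = s + k := ⟨n - k, by omega⟩
    exact (hdecr s).trans ih

end Recurrence

theorem pow_div_pow_succ_eq (k : ℕ) :
    (k : ℝ) ^ k / (k + 1) ^ (k + 1) = (1 - k / (k + 1)) * (k / (k + 1)) ^ k := by
  have hk : (k : ℝ) + 1 ≠ 0 := by positivity
  rw [div_pow, one_sub_div hk, add_sub_cancel_left, pow_succ]
  field_simp

/-- With `ρ = k^k/(k+1)^(k+1)`, the value
`∑_{0 ≤ ℓ ≤ t/k} binom(t-kℓ, ℓ)(-ρ)^ℓ` of the determinant polynomial `D_t` at the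
singularity equals 1 for `t ≤ k`, and is strictly less than 1 for `t > k`. -/
theorem stmt_14 (k t : ℕ) (hk : 0 < k) :
    (t ≤ k →
      (∑ ℓ ∈ Finset.range (t / k + 1),
        ((t - k * ℓ).choose ℓ : ℝ) * (-((k : ℝ) ^ k / (k + 1) ^ (k + 1))) ^ ℓ) = 1) ∧
    (k < t →
      (∑ ℓ ∈ Finset.range (t / k + 1),
        ((t - k * ℓ).choose ℓ : ℝ) * (-((k : ℝ) ^ k / (k + 1) ^ (k + 1))) ^ ℓ) < 1) := by
  rw [sum_range_div_add_one_eq_detSum hk]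
  set x : ℝ := -((k : ℝ) ^ k / (k + 1) ^ (k + 1)) with hx
  set r : ℝ := k / (k + 1)
  have hr₀ : 0 < r := by positivity
  have hr₁ : r < 1 := (div_lt_one (by positivity)).2 (by linarith)
  have hrec (s : ℕ) :
      detSum k x (s + k + 1) = detSum k x (s + k) - (1 - r) * r ^ k * detSum k x s := by
    rw [detSum_add_succ, hx, pow_div_pow_succ_eq]
    ring
  exact ⟨detSum_of_le _, lt_one_of_recurrence hr₀ hr₁ (fun _ => detSum_of_le _) hrec⟩
end
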